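/- arXiv:1203.2445 — 3 statements merged into one kernel-verified Lean document; each statement's English description precedes it below -/
import Mathlib

section
/- Error of Clenshaw–Curtis quadrature on even Chebyshev polynomials: let n ≥ 2, let j ≥ 1 and r be integers with |2r| ≤ n−1, and set m = 2j(n−1)+2r (so m is even and m ≥ n−1 > 1). Then the n-point Clenshaw–Curtis rule satisfies ∑_{k=1}^n w_k T_m(x_k) = ∫_{−1}^1 T_{2|r|}(x) dx = −2/(4r²−1), and hence its error on T_m equals E_n^C(T_m) = −2/(m²−1) + 2/(4r²−1). -/
/-!
At the Clenshaw–Curtis nodes `x_k = cos θ_k`, `θ_k = kπ/(n-1)`, we have `T_m(x_k) = cos(m θ_k)`,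
and `m θ_k - 2r θ_k = 2jkπ`, so `T_m` and `T_{2|r|}` agree at every node. Since
`deg T_{2|r|} ≤ n - 1`, the rule integrates `T_{2|r|}` exactly. The integrals of even Chebyshev
polynomials come from the antiderivative `(c-1) T_{c+1} - (c+1) T_{c-1}` of `2(c²-1) T_c`,
whose values at `±1` are `∓2`.
-/

open Polynomial Polynomial.Chebyshev Real

theorem Polynomial.integral_eval_derivative (p : ℝ[X]) (a b : ℝ) :
    ∫ x in a..b, (derivative p).eval x = p.eval b - p.eval a :=
  intervalIntegral.integral_eq_sub_of_hasDerivAt (fun x _ ↦ p.hasDerivAt x)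
    ((derivative p).continuous.intervalIntegrable a b)

namespace Polynomial.Chebyshev

section CommRing

variable (R : Type*) [CommRing R]

theorem T_abs (n : ℤ) : T R |n| = T R n := by
  rw [← Int.natCast_natAbs, T_natAbs]

theorem two_mul_sq_sub_one_mul_T_eq_derivative (c : ℤ) :
    2 * ((c : R[X]) ^ 2 - 1) * T R c =
      derivative (((c : R[X]) - 1) * T R (c + 1) - ((c : R[X]) + 1) * T R (c - 1)) := by
  have hU : 2 * T R c = U R c - U R (c - 2) := by
    simpa using two_mul_T_eq_U_sub_U R (c - 2)
  simp only [derivative_sub, derivative_add, derivative_mul, derivative_intCast, derivative_one,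
    T_derivative_eq_U, sub_zero, zero_mul, zero_add, add_sub_cancel_right, sub_sub,
    one_add_one_eq_two]
  push_cast
  linear_combination ((c : R[X]) ^ 2 - 1) * hU

end CommRing

theorem integral_eval_T_of_even {c : ℤ} (hc : Even c) :
    ∫ x in (-1 : ℝ)..1, (T ℝ c).eval x = -2 / ((c : ℝ) ^ 2 - 1) := by
  have hT_add : (T ℝ (c + 1)).eval (-1) = -1 := by
    simp [Int.negOnePow_odd _ hc.add_one]
  have hT_sub : (T ℝ (c - 1)).eval (-1) = -1 := by
    simp [Int.negOnePow_odd _ (hc.sub_odd odd_one)]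
  have hsq : (c : ℝ) ^ 2 - 1 ≠ 0 := by
    have hodd : Odd (c ^ 2 - 1) := (hc.pow_of_ne_zero two_ne_zero).sub_odd odd_one
    exact_mod_cast fun h : c ^ 2 - 1 = 0 ↦ Int.not_even_iff_odd.2 hodd (h ▸ .zero)
  have key := congrArg (fun p : ℝ[X] ↦ ∫ x in (-1 : ℝ)..1, p.eval x)
    (two_mul_sq_sub_one_mul_T_eq_derivative ℝ c)
  simp only [integral_eval_derivative, eval_mul, eval_sub, eval_pow, eval_intCast, eval_one,
    eval_ofNat, intervalIntegral.integral_const_mul, T_eval_one, hT_add, hT_sub, eval_add] at key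
  rw [eq_div_iff hsq]
  linear_combination key / 2

theorem T_real_two_mul_mul_add_eval_cos (a b k : ℤ) {N : ℤ} (hN : N ≠ 0) :
    (T ℝ (2 * a * N + b)).eval (cos (k * π / N)) = (T ℝ b).eval (cos (k * π / N)) := by
  have hperiod : ((2 * a * N + b : ℤ) : ℝ) * (k * π / N) =
      b * (k * π / N) + (a * k : ℤ) * (2 * π) := by
    have : (N : ℝ) ≠ 0 := by exact_mod_cast hN
    push_cast
    field_simp
    ring
  rw [T_real_cos, T_real_cos, hperiod, cos_add_int_mul_two_pi]

end Polynomial.Chebyshev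

theorem cc_error_chebyshev_general (n : ℕ) (hn : 2 ≤ n) (j : ℕ) (r : ℤ)
    (hr : 2 * |r| ≤ (n : ℤ) - 1) (m : ℤ) (hm : m = 2 * (j : ℤ) * ((n : ℤ) - 1) + 2 * r)
    (w : Fin n → ℝ)
    (hw : ∀ p : Polynomial ℝ, p.natDegree ≤ n - 1 →
      ∑ k : Fin n, w k * p.eval (Real.cos ((k : ℝ) * Real.pi / ((n : ℝ) - 1))) =
        ∫ x in (-1:ℝ)..1, p.eval x) :
    (∑ k : Fin n, w k * (Polynomial.Chebyshev.T ℝ m).eval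
          (Real.cos ((k : ℝ) * Real.pi / ((n : ℝ) - 1))) =
        ∫ x in (-1:ℝ)..1, (Polynomial.Chebyshev.T ℝ (2 * |r|)).eval x) ∧
    (∫ x in (-1:ℝ)..1, (Polynomial.Chebyshev.T ℝ (2 * |r|)).eval x) =
        -2 / (4 * (r : ℝ) ^ 2 - 1) ∧
    (∫ x in (-1:ℝ)..1, (Polynomial.Chebyshev.T ℝ m).eval x) -
        (∑ k : Fin n, w k * (Polynomial.Chebyshev.T ℝ m).eval
          (Real.cos ((k : ℝ) * Real.pi / ((n : ℝ) - 1)))) =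
      -2 / ((m : ℝ) ^ 2 - 1) + 2 / (4 * (r : ℝ) ^ 2 - 1) := by
  have hN : (n : ℤ) - 1 ≠ 0 := by omega
  have hnode (k : Fin n) : (T ℝ m).eval (cos (k * π / ((n : ℝ) - 1))) =
      (T ℝ (2 * |r|)).eval (cos (k * π / ((n : ℝ) - 1))) := by
    have halias := T_real_two_mul_mul_add_eval_cos j (2 * r) k hN
    push_cast at halias
    rw [hm, halias, show 2 * |r| = |2 * r| by rw [abs_mul, abs_two], T_abs]
  have hrule : ∑ k : Fin n, w k * (T ℝ m).eval (cos (k * π / ((n : ℝ) - 1))) =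
      ∫ x in (-1 : ℝ)..1, (T ℝ (2 * |r|)).eval x := by
    simp_rw [hnode]
    refine hw _ ?_
    rw [natDegree_T]
    have hr₀ := abs_nonneg r
    omega
  have hint : ∫ x in (-1 : ℝ)..1, (T ℝ (2 * |r|)).eval x = -2 / (4 * (r : ℝ) ^ 2 - 1) := by
    rw [integral_eval_T_of_even ⟨|r|, two_mul _⟩]
    push_cast
    rw [mul_pow, sq_abs]
    norm_num
  refine ⟨hrule, hint, ?_⟩
  rw [hrule, hint, integral_eval_T_of_even ⟨j * ((n : ℤ) - 1) + r, by rw [hm]; ring⟩]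
  ring

/-- Error of the `n`-point Clenshaw–Curtis rule on even Chebyshev polynomials:
for `m = 2j(n-1) + 2r` with `j ≥ 1` and `|2r| ≤ n-1`, the rule applied to `T_m` yields
`∫_{-1}^1 T_{2|r|}(x) dx = -2/(4r²-1)`, and hence
`E_n^C(T_m) = -2/(m²-1) + 2/(4r²-1)`. -/
theorem cc_error_chebyshev (n : ℕ) (hn : 2 ≤ n) (j : ℕ) (hj : 1 ≤ j) (r : ℤ)
    (hr : 2 * |r| ≤ (n : ℤ) - 1) (m : ℤ) (hm : m = 2 * (j : ℤ) * ((n : ℤ) - 1) + 2 * r)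
    (w : Fin n → ℝ)
    (hw : ∀ p : Polynomial ℝ, p.natDegree ≤ n - 1 →
      ∑ k : Fin n, w k * p.eval (Real.cos ((k : ℝ) * Real.pi / ((n : ℝ) - 1))) =
        ∫ x in (-1:ℝ)..1, p.eval x) :
    (∑ k : Fin n, w k * (Polynomial.Chebyshev.T ℝ m).eval
          (Real.cos ((k : ℝ) * Real.pi / ((n : ℝ) - 1))) =
        ∫ x in (-1:ℝ)..1, (Polynomial.Chebyshev.T ℝ (2 * |r|)).eval x) ∧
    (∫ x in (-1:ℝ)..1, (Polynomial.Chebyshev.T ℝ (2 * |r|)).eval x) =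
        -2 / (4 * (r : ℝ) ^ 2 - 1) ∧
    (∫ x in (-1:ℝ)..1, (Polynomial.Chebyshev.T ℝ m).eval x) -
        (∑ k : Fin n, w k * (Polynomial.Chebyshev.T ℝ m).eval
          (Real.cos ((k : ℝ) * Real.pi / ((n : ℝ) - 1)))) =
      -2 / ((m : ℝ) ^ 2 - 1) + 2 / (4 * (r : ℝ) ^ 2 - 1) :=
  cc_error_chebyshev_general n hn j r hr m hm w hw
end

section
/- Let s > 0. There is a constant C > 0 (depending only on s) such that for every n ≥ 2 the double sum S_1 = ∑_{j=1}^{∞} ∑_{r : |2r| < n} (1/|4r²−1|) · (2j(n−1)+2r)^{−s−1} (sum over all integers r, positive and negative, with |2r| < n) is finite and satisfies S_1 ≤ C · n^{−s−1}. -/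
open Real

private lemma g_summable : Summable (fun r : ℤ => 1 / |4 * (r : ℝ) ^ 2 - 1|) := by
  have h2 : Summable (fun r : ℤ => (if r = 0 then (1:ℝ) else 0)) :=
    summable_of_ne_finset_zero (s := {0}) (by intro b hb; simp at hb ⊢; tauto)
  have h1 : Summable (fun r : ℤ => 1 / (r : ℝ) ^ 2) :=
    summable_one_div_int_pow.mpr one_lt_two
  refine Summable.of_nonneg_of_le (fun r => by positivity) ?_ (h1.add h2)
  intro r
  by_cases hr : r = 0
  · subst hr; norm_num
  · have hr1 : (1:ℝ) ≤ (r : ℝ) ^ 2 := by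
      have : 1 ≤ |r| := Int.one_le_abs hr
      have : (1:ℝ) ≤ |(r:ℝ)| := by exact_mod_cast (by simpa using this)
      nlinarith [abs_nonneg (r:ℝ), sq_abs (r:ℝ)]
    have habs : |4 * (r : ℝ) ^ 2 - 1| = 4 * (r : ℝ) ^ 2 - 1 := by
      rw [abs_of_pos]; nlinarith
    rw [habs, if_neg hr, add_zero]
    rw [div_le_div_iff₀ (by nlinarith) (by nlinarith)]
    nlinarith

private lemma a_summable (s : ℝ) (hs : 0 < s) :
    Summable (fun j : ℕ => ((j : ℝ) + 1) ^ (-s - 1)) := by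
  have h := (Real.summable_nat_rpow (p := -s - 1)).mpr (by linarith)
  have := (summable_nat_add_iff (f := fun n : ℕ => (n : ℝ) ^ (-s - 1)) 1).mpr h
  refine this.congr fun j => ?_
  push_cast
  ring_nf

set_option maxHeartbeats 2000000 in
/-- For `s > 0` there is `C > 0` (depending only on `s`) such that for all `n ≥ 2` the
double sum `S₁ = ∑_{j=1}^∞ ∑_{|2r| < n} (1/|4r²-1|) (2j(n-1)+2r)^{-s-1}` converges and
is bounded by `C n^{-s-1}`. (The outer index below is `j = p.1 + 1 ≥ 1`.) -/
theorem S1_bound (s : ℝ) (hs : 0 < s) :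
    ∃ C > 0, ∀ n : ℕ, 2 ≤ n →
      Summable (fun p : ℕ × {r : ℤ // 2 * |r| < (n : ℤ)} =>
        (1 / |4 * ((p.2 : ℤ) : ℝ) ^ 2 - 1|) *
          (2 * ((p.1 : ℝ) + 1) * ((n : ℝ) - 1) + 2 * ((p.2 : ℤ) : ℝ)) ^ (-s - 1)) ∧
      (∑' p : ℕ × {r : ℤ // 2 * |r| < (n : ℤ)},
        (1 / |4 * ((p.2 : ℤ) : ℝ) ^ 2 - 1|) *
          (2 * ((p.1 : ℝ) + 1) * ((n : ℝ) - 1) + 2 * ((p.2 : ℤ) : ℝ)) ^ (-s - 1)) ≤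
        C * (n : ℝ) ^ (-s - 1) := by
  set a : ℕ → ℝ := fun j => ((j : ℝ) + 1) ^ (-s - 1) with ha_def
  set g : ℤ → ℝ := fun r => 1 / |4 * (r : ℝ) ^ 2 - 1| with hg_def
  have ha : Summable a := a_summable s hs
  have hg : Summable g := g_summable
  have ha0 : ∀ j, 0 ≤ a j := fun j => Real.rpow_nonneg (by positivity) _
  have hg0 : ∀ r, 0 ≤ g r := fun r => by positivity
  set A := ∑' j, a j with hA
  set B := ∑' r, g r with hB
  have hA0 : 0 ≤ A := tsum_nonneg ha0
  have hB0 : 0 ≤ B := tsum_nonneg hg0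
  refine ⟨2 ^ (s + 1) * (A + 1) * (B + 1), by positivity, ?_⟩
  intro n hn
  have hn2 : (2 : ℝ) ≤ (n : ℝ) := by exact_mod_cast hn
  have hgs : Summable (fun r : {r : ℤ // 2 * |r| < (n : ℤ)} => g r) :=
    hg.subtype _
  set K : ℝ := 2 ^ (s + 1) * (n : ℝ) ^ (-s - 1) with hK
  have hK0 : 0 ≤ K := by positivity
  -- pointwise bound
  have hkey : ∀ p : ℕ × {r : ℤ // 2 * |r| < (n : ℤ)},
      (1 / |4 * ((p.2 : ℤ) : ℝ) ^ 2 - 1|) *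
        (2 * ((p.1 : ℝ) + 1) * ((n : ℝ) - 1) + 2 * ((p.2 : ℤ) : ℝ)) ^ (-s - 1) ≤
      (a p.1 * g p.2) * K := by
    rintro ⟨j, r, hr⟩
    simp only
    have hrn : 2 * |(r : ℝ)| ≤ (n : ℝ) - 1 := by
      have h' : 2 * |r| ≤ (n : ℤ) - 1 := by omega
      exact_mod_cast h'
    have hj1 : (1 : ℝ) ≤ (j : ℝ) + 1 := by
      have := Nat.cast_nonneg (α := ℝ) j; linarith
    have hbase : ((j : ℝ) + 1) * ((n : ℝ) / 2) ≤
        2 * ((j : ℝ) + 1) * ((n : ℝ) - 1) + 2 * (r : ℝ) := by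
      have h1 : -((n:ℝ) - 1) ≤ 2 * (r:ℝ) := by
        have := neg_abs_le (r:ℝ); nlinarith [abs_nonneg (r:ℝ)]
      nlinarith [abs_nonneg (r:ℝ)]
    have hpos : (0 : ℝ) < ((j : ℝ) + 1) * ((n : ℝ) / 2) := by positivity
    have hpow : (2 * ((j : ℝ) + 1) * ((n : ℝ) - 1) + 2 * (r : ℝ)) ^ (-s - 1) ≤
        (((j : ℝ) + 1) * ((n : ℝ) / 2)) ^ (-s - 1) :=
      Real.rpow_le_rpow_of_nonpos hpos hbase (by linarith)
    have hsplit : (((j : ℝ) + 1) * ((n : ℝ) / 2)) ^ (-s - 1) = a j * K := by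
      rw [Real.mul_rpow (by positivity) (by positivity), ha_def]
      have : ((n : ℝ) / 2) ^ (-s - 1) = (n : ℝ) ^ (-s - 1) * 2 ^ (s + 1) := by
        rw [div_eq_mul_inv, Real.mul_rpow (by positivity) (by positivity),
          Real.inv_rpow (by norm_num), show -s - 1 = -(s + 1) by ring,
          Real.rpow_neg (by norm_num : (0:ℝ) ≤ 2), inv_inv]
      rw [this, hK]; ring
    calc (1 / |4 * ((r : ℤ) : ℝ) ^ 2 - 1|) *
          (2 * ((j : ℝ) + 1) * ((n : ℝ) - 1) + 2 * ((r : ℤ) : ℝ)) ^ (-s - 1)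
        ≤ (1 / |4 * ((r : ℤ) : ℝ) ^ 2 - 1|) * (a j * K) :=
          mul_le_mul_of_nonneg_left (hsplit ▸ hpow) (by positivity)
      _ = (a j * g r) * K := by simp only [hg_def]; ring
  have hbound_sum : Summable (fun p : ℕ × {r : ℤ // 2 * |r| < (n : ℤ)} =>
      (a p.1 * g p.2) * K) :=
    (ha.mul_of_nonneg hgs ha0 (fun r => hg0 r)).mul_right K
  have hterm_nonneg : ∀ p : ℕ × {r : ℤ // 2 * |r| < (n : ℤ)},
      0 ≤ (1 / |4 * ((p.2 : ℤ) : ℝ) ^ 2 - 1|) *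
        (2 * ((p.1 : ℝ) + 1) * ((n : ℝ) - 1) + 2 * ((p.2 : ℤ) : ℝ)) ^ (-s - 1) := by
    rintro ⟨j, r, hr⟩
    have hrn : 2 * |(r : ℝ)| ≤ (n : ℝ) - 1 := by
      have h' : 2 * |r| ≤ (n : ℤ) - 1 := by omega
      exact_mod_cast h'
    have hbpos : (0 : ℝ) < 2 * ((j : ℝ) + 1) * ((n : ℝ) - 1) + 2 * (r : ℝ) := by
      have h1 : -((n:ℝ) - 1) ≤ 2 * (r:ℝ) := by
        have := neg_abs_le (r:ℝ); nlinarith [abs_nonneg (r:ℝ)]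
      have hj1 : (1 : ℝ) ≤ (j : ℝ) + 1 := by
        have := Nat.cast_nonneg (α := ℝ) j; linarith
      nlinarith
    have h2 := Real.rpow_nonneg hbpos.le (-s - 1)
    positivity
  have hsummable : Summable (fun p : ℕ × {r : ℤ // 2 * |r| < (n : ℤ)} =>
      (1 / |4 * ((p.2 : ℤ) : ℝ) ^ 2 - 1|) *
        (2 * ((p.1 : ℝ) + 1) * ((n : ℝ) - 1) + 2 * ((p.2 : ℤ) : ℝ)) ^ (-s - 1)) :=
    Summable.of_nonneg_of_le hterm_nonneg hkey hbound_sum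
  refine ⟨hsummable, ?_⟩
  have h1 : (∑' p : ℕ × {r : ℤ // 2 * |r| < (n : ℤ)},
      (1 / |4 * ((p.2 : ℤ) : ℝ) ^ 2 - 1|) *
        (2 * ((p.1 : ℝ) + 1) * ((n : ℝ) - 1) + 2 * ((p.2 : ℤ) : ℝ)) ^ (-s - 1)) ≤
      ∑' p : ℕ × {r : ℤ // 2 * |r| < (n : ℤ)}, (a p.1 * g p.2) * K :=
    Summable.tsum_le_tsum hkey hsummable hbound_sum
  have h2 : (∑' p : ℕ × {r : ℤ // 2 * |r| < (n : ℤ)}, (a p.1 * g p.2) * K)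
      = (A * ∑' r : {r : ℤ // 2 * |r| < (n : ℤ)}, g r) * K := by
    rw [tsum_mul_right]
    congr 1
    exact (Summable.tsum_mul_tsum ha hgs (ha.mul_of_nonneg hgs ha0 (fun r => hg0 r))).symm
  have hB' : (∑' r : {r : ℤ // 2 * |r| < (n : ℤ)}, g r) ≤ B :=
    Summable.tsum_subtype_le g {r : ℤ | 2 * |r| < (n : ℤ)} hg0 hg
  have hB'0 : 0 ≤ ∑' r : {r : ℤ // 2 * |r| < (n : ℤ)}, g r :=
    tsum_nonneg (fun r => hg0 r)
  calc (∑' p : ℕ × {r : ℤ // 2 * |r| < (n : ℤ)},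
      (1 / |4 * ((p.2 : ℤ) : ℝ) ^ 2 - 1|) *
        (2 * ((p.1 : ℝ) + 1) * ((n : ℝ) - 1) + 2 * ((p.2 : ℤ) : ℝ)) ^ (-s - 1))
      ≤ (A * ∑' r : {r : ℤ // 2 * |r| < (n : ℤ)}, g r) * K := by rw [← h2]; exact h1
    _ ≤ ((A + 1) * (B + 1)) * K := by
        have hnK : 0 ≤ (n:ℝ) ^ (-s - 1) := Real.rpow_nonneg (by positivity) _
        gcongr <;> linarith
    _ = 2 ^ (s + 1) * (A + 1) * (B + 1) * (n : ℝ) ^ (-s - 1) := by rw [hK]; ring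
end

section
/- Let s > 0 and let f : [-1,1] → ℝ be a continuous function of class X^s. Then there is a constant C > 0 (depending only on f and s) such that for every n ≥ 1 the error of the n-point Gauss rule satisfies |E_n^G(f)| ≤ C · n^{−s}. -/
/-- The `m`-th Chebyshev coefficient of `f`:
`a_m = (2/π) ∫_0^π f(cos θ) cos(mθ) dθ`. -/
noncomputable def chebCoeff (f : ℝ → ℝ) (m : ℕ) : ℝ :=
  (2 / Real.pi) * ∫ θ in (0:ℝ)..Real.pi, f (Real.cos θ) * Real.cos (m * θ)

/-!
Pulled back to the circle by `t = cos θ`, `f` becomes the even `2π`-periodic function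
`θ ↦ f (cos θ)`, whose Fourier coefficients are `a_{|i|} / 2`. The decay `|a_m| ≤ A m^{-s-1}`
makes them summable, so the Fourier series converges pointwise and, read back on `[-1, 1]`,
gives `f = a₀/2 + ∑_{m ≥ 1} a_m T_m`. Truncating at degree `N = 2n - 1` leaves a uniform error of
at most `∑_{m > N} A m^{-s-1} ≤ A N^{-s} / s`. The Gauss rule integrates the truncation exactly
and has positive weights summing to `2`, so its error on `f` is at most four times the uniform
error, i.e. `O(n^{-s})`.
-/

open Real Set Polynomial

theorem tsum_rpow_nat_add_le {s : ℝ} (hs : 0 < s) {N : ℕ} (hN : 0 < N) :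
    ∑' k : ℕ, ((k + N + 1 : ℕ) : ℝ) ^ (-s - 1) ≤ (N : ℝ) ^ (-s) / s := by
  have hN' : (0 : ℝ) < N := by exact_mod_cast hN
  calc ∑' k : ℕ, ((k + N + 1 : ℕ) : ℝ) ^ (-s - 1)
      ≤ ∫ x in Ioi (N : ℝ), x ^ (-s - 1) := by
        refine AntitoneOn.tsum_comp_add_le_integral N ?_ (integrableOn_Ioi_rpow_of_lt
          (by linarith) hN') fun t ht => rpow_nonneg (hN'.trans ht).le _
        exact fun a ha b _ hab => rpow_le_rpow_of_nonpos (hN'.trans_le ha) hab (by linarith)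
    _ = (N : ℝ) ^ (-s) / s := by
        rw [integral_Ioi_rpow_of_lt (by linarith) hN', sub_add_cancel, div_neg, neg_div,
          neg_neg]

theorem intervalIntegral.integral_neg_self_eq_integral_add_comp_neg {E : Type*}
    [NormedAddCommGroup E] [NormedSpace ℝ E] {h : ℝ → E} (hh : Continuous h) (a : ℝ) :
    ∫ x in -a..a, h x = ∫ x in 0..a, (h x + h (-x)) := by
  have hneg : IntervalIntegrable (fun x => h (-x)) MeasureTheory.volume 0 a :=
    (hh.comp continuous_neg).intervalIntegrable _ _
  rw [intervalIntegral.integral_add (hh.intervalIntegrable _ _) hneg,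
    intervalIntegral.integral_comp_neg (f := h), neg_zero, add_comm,
    intervalIntegral.integral_add_adjacent_intervals (hh.intervalIntegrable _ _)
    (hh.intervalIntegrable _ _)]

local instance : Fact (0 < 2 * π) := ⟨two_pi_pos⟩

theorem fourier_coe_two_pi (i : ℤ) (θ : ℝ) :
    fourier i (θ : AddCircle (2 * π)) = Complex.exp (i * θ * Complex.I) := by
  rw [fourier_coe_apply]
  congr 1
  field_simp [pi_ne_zero]
  push_cast
  ring

theorem ContinuousOn.continuous_comp_cos {f : ℝ → ℝ} (hf : ContinuousOn f (Icc (-1) 1)) :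
    Continuous fun θ => f (cos θ) :=
  hf.comp_continuous continuous_cos fun θ => ⟨neg_one_le_cos θ, cos_le_one θ⟩

noncomputable def compCosCircle (f : ℝ → ℝ) (hf : ContinuousOn f (Icc (-1) 1)) :
    C(AddCircle (2 * π), ℂ) where
  toFun := Function.Periodic.lift (f := fun θ => (f (cos θ) : ℂ)) fun θ => by
    simp only [cos_add_two_pi]
  continuous_toFun :=
    (Complex.continuous_ofReal.comp hf.continuous_comp_cos).quotient_liftOn' _

@[simp]
theorem compCosCircle_coe {f : ℝ → ℝ} (hf : ContinuousOn f (Icc (-1) 1)) (θ : ℝ) :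
    compCosCircle f hf θ = f (cos θ) :=
  rfl

theorem fourierCoeff_compCosCircle {f : ℝ → ℝ} (hf : ContinuousOn f (Icc (-1) 1)) (i : ℤ) :
    fourierCoeff (compCosCircle f hf) i
      = ((π⁻¹ * ∫ θ in 0..π, f (cos θ) * cos (i * θ) : ℝ) : ℂ) := by
  have hcont : Continuous fun θ : ℝ =>
      fourier (-i) (θ : AddCircle (2 * π)) • compCosCircle f hf θ :=
    ((fourier (-i)).continuous.comp continuous_quotient_mk').smul
      ((compCosCircle f hf).continuous.comp continuous_quotient_mk')
  have h_fold : ∀ θ : ℝ, fourier (-i) (θ : AddCircle (2 * π)) • compCosCircle f hf θ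
      + fourier (-i) ((-θ : ℝ) : AddCircle (2 * π)) • compCosCircle f hf (-θ : ℝ)
      = ((2 * (f (cos θ) * cos (i * θ)) : ℝ) : ℂ) := by
    intro θ
    simp only [fourier_coe_two_pi, compCosCircle_coe, cos_neg, smul_eq_mul]
    push_cast
    rw [mul_left_comm (2 : ℂ), Complex.two_cos]
    ring_nf
  rw [fourierCoeff_eq_intervalIntegral _ i (-π), show -π + 2 * π = π by ring,
    intervalIntegral.integral_neg_self_eq_integral_add_comp_neg hcont]
  simp only [h_fold, intervalIntegral.integral_ofReal, intervalIntegral.integral_const_mul]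
  rw [Complex.real_smul]
  push_cast
  field_simp

theorem fourierCoeff_compCosCircle_eq_chebCoeff {f : ℝ → ℝ} (hf : ContinuousOn f (Icc (-1) 1))
    (i : ℤ) : fourierCoeff (compCosCircle f hf) i = ((chebCoeff f i.natAbs / 2 : ℝ) : ℂ) := by
  have h_abs : ∀ θ : ℝ, cos (i * θ) = cos (i.natAbs * θ) := by
    obtain ⟨m, rfl | rfl⟩ := Int.eq_nat_or_neg i <;> simp
  simp only [fourierCoeff_compCosCircle, h_abs, chebCoeff]
  congr 1
  ring

theorem hasSum_chebCoeff_mul_cos {f : ℝ → ℝ} (hf : ContinuousOn f (Icc (-1) 1))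
    (hsum : Summable (chebCoeff f)) (θ : ℝ) :
    HasSum (fun m : ℕ => chebCoeff f m * cos (m * θ)) (f (cos θ) + chebCoeff f 0 / 2) := by
  have hc := fourierCoeff_compCosCircle_eq_chebCoeff hf
  have hc_sum : Summable (fourierCoeff (compCosCircle f hf)) := by
    have : Summable fun m : ℕ => ((chebCoeff f m / 2 : ℝ) : ℂ) :=
      Complex.summable_ofReal.2 (hsum.div_const 2)
    refine .of_nat_of_neg ?_ ?_ <;> simpa [hc] using this
  have h_pair :=
    (has_pointwise_sum_fourier_series_of_summable hc_sum (θ : AddCircle (2 * π))).nat_add_neg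
  rw [← Complex.hasSum_ofReal]
  convert h_pair using 1
  · ext m
    simp only [hc, fourier_coe_two_pi, smul_eq_mul, Int.natAbs_neg, Int.natAbs_natCast]
    push_cast
    rw [Complex.cos]
    ring_nf
  · simp [hc]

/-- The Chebyshev partial sum `a₀/2 + ∑_{m=1}^N a_m T_m`. -/
noncomputable def chebPartialSum (f : ℝ → ℝ) (N : ℕ) : ℝ[X] :=
  ∑ m ∈ Finset.range (N + 1), C (chebCoeff f m) * Chebyshev.T ℝ m - C (chebCoeff f 0 / 2)

theorem natDegree_chebPartialSum_le (f : ℝ → ℝ) (N : ℕ) :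
    (chebPartialSum f N).natDegree ≤ N := by
  refine (natDegree_sub_le _ _).trans (max_le ?_ (by simp))
  refine natDegree_sum_le_of_forall_le _ _ fun m hm => (natDegree_C_mul_le _ _).trans ?_
  rw [Chebyshev.natDegree_T, Int.natAbs_natCast]
  exact Nat.lt_succ_iff.1 (Finset.mem_range.1 hm)

theorem chebPartialSum_eval_cos (f : ℝ → ℝ) (N : ℕ) (θ : ℝ) :
    (chebPartialSum f N).eval (cos θ)
      = ∑ m ∈ Finset.range (N + 1), chebCoeff f m * cos (m * θ) - chebCoeff f 0 / 2 := by
  simp [chebPartialSum, eval_finsetSum, Chebyshev.T_real_cos]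

theorem abs_sub_chebPartialSum_le {f : ℝ → ℝ} (hf : ContinuousOn f (Icc (-1) 1))
    (hsum : Summable (chebCoeff f)) (N : ℕ) {t : ℝ} (ht : t ∈ Icc (-1) 1) :
    |f t - (chebPartialSum f N).eval t| ≤ ∑' k : ℕ, |chebCoeff f (k + N + 1)| := by
  obtain ⟨θ, rfl⟩ : ∃ θ, cos θ = t := ⟨arccos t, cos_arccos ht.1 ht.2⟩
  have h := hasSum_chebCoeff_mul_cos hf hsum θ
  have h_tail : f (cos θ) - (chebPartialSum f N).eval (cos θ)
      = ∑' k : ℕ, chebCoeff f (k + N + 1) * cos ((k + N + 1 : ℕ) * θ) := by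
    have h_split := h.summable.sum_add_tsum_nat_add (N + 1)
    rw [h.tsum_eq] at h_split
    simp only [← add_assoc] at h_split
    rw [chebPartialSum_eval_cos]
    linarith
  rw [h_tail, ← Real.norm_eq_abs]
  refine tsum_of_norm_bounded ((summable_nat_add_iff (N + 1)).2 hsum.abs).hasSum fun k => ?_
  rw [Real.norm_eq_abs, abs_mul]
  exact mul_le_of_le_one_right (abs_nonneg _) (abs_cos_le_one _)

theorem abs_sub_chebPartialSum_le_of_decay {f : ℝ → ℝ} (hf : ContinuousOn f (Icc (-1) 1))
    {s A : ℝ} (hs : 0 < s) (hA : ∀ m : ℕ, 1 ≤ m → |chebCoeff f m| ≤ A * (m : ℝ) ^ (-s - 1))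
    {N : ℕ} (hN : 0 < N) {t : ℝ} (ht : t ∈ Icc (-1) 1) :
    |f t - (chebPartialSum f N).eval t| ≤ A * (N : ℝ) ^ (-s) / s := by
  have hA_nonneg : 0 ≤ A := by simpa using (abs_nonneg _).trans (hA 1 le_rfl)
  have h_pow : Summable fun m : ℕ => A * (m : ℝ) ^ (-s - 1) :=
    (Real.summable_nat_rpow.2 (by linarith)).mul_left A
  have hsum : Summable (chebCoeff f) := by
    refine .of_norm_bounded_eventually h_pow (Filter.eventually_cofinite.2 ?_)
    refine (Set.finite_singleton 0).subset fun m hm => ?_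
    by_contra h0
    exact hm (hA m (Nat.one_le_iff_ne_zero.2 h0))
  calc |f t - (chebPartialSum f N).eval t| ≤ ∑' k : ℕ, |chebCoeff f (k + N + 1)| :=
        abs_sub_chebPartialSum_le hf hsum N ht
    _ ≤ ∑' k : ℕ, A * ((k + N + 1 : ℕ) : ℝ) ^ (-s - 1) :=
        Summable.tsum_le_tsum (fun k => hA _ (by omega))
          ((summable_nat_add_iff (f := fun m => |chebCoeff f m|) (N + 1)).2 hsum.abs)
          ((summable_nat_add_iff (f := fun m : ℕ => A * (m : ℝ) ^ (-s - 1)) (N + 1)).2 h_pow)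
    _ = A * ∑' k : ℕ, ((k + N + 1 : ℕ) : ℝ) ^ (-s - 1) := tsum_mul_left
    _ ≤ A * ((N : ℝ) ^ (-s) / s) :=
        mul_le_mul_of_nonneg_left (tsum_rpow_nat_add_le hs hN) hA_nonneg
    _ = A * (N : ℝ) ^ (-s) / s := by ring

theorem abs_integral_sub_sum_le_of_exact {ι : Type*} [Fintype ι] {a b ε : ℝ} (hab : a ≤ b)
    {f : ℝ → ℝ} (hf : IntervalIntegrable f MeasureTheory.volume a b) (p : ℝ[X])
    (hfp : ∀ t ∈ Icc a b, |f t - p.eval t| ≤ ε) (x w : ι → ℝ) (hx : ∀ k, x k ∈ Icc a b)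
    (hw : ∀ k, 0 ≤ w k) (hw_sum : ∑ k, w k = b - a)
    (hp : ∑ k, w k * p.eval (x k) = ∫ t in a..b, p.eval t) :
    |(∫ t in a..b, f t) - ∑ k, w k * f (x k)| ≤ 2 * (b - a) * ε := by
  have h_int : |∫ t in a..b, (f t - p.eval t)| ≤ ε * (b - a) := by
    have := intervalIntegral.norm_integral_le_of_norm_le_const (a := a) (b := b)
      (f := fun t => f t - p.eval t) (C := ε) fun t ht => by
        rw [uIoc_of_le hab] at ht
        exact hfp t (Ioc_subset_Icc_self ht)
    rwa [Real.norm_eq_abs, abs_of_nonneg (sub_nonneg.2 hab)] at this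
  have h_sum : |∑ k, w k * (f (x k) - p.eval (x k))| ≤ (b - a) * ε := by
    calc |∑ k, w k * (f (x k) - p.eval (x k))| ≤ ∑ k, w k * ε := by
          refine (Finset.abs_sum_le_sum_abs _ _).trans (Finset.sum_le_sum fun k _ => ?_)
          rw [abs_mul, abs_of_nonneg (hw k)]
          exact mul_le_mul_of_nonneg_left (hfp _ (hx k)) (hw k)
      _ = (b - a) * ε := by rw [← Finset.sum_mul, hw_sum]
  have h_split : (∫ t in a..b, f t) - ∑ k, w k * f (x k)
      = (∫ t in a..b, (f t - p.eval t)) - ∑ k, w k * (f (x k) - p.eval (x k)) := by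
    simp only [mul_sub, Finset.sum_sub_distrib, hp,
      intervalIntegral.integral_sub hf (p.continuous.intervalIntegrable a b)]
    ring
  rw [h_split]
  calc _ ≤ _ := abs_sub _ _
    _ ≤ 2 * (b - a) * ε := by linarith

/-- If `f` is continuous on `[-1,1]` and of class `X^s` with `s > 0`, then the error of the
`n`-point Gauss rule is `O(n^{-s})`. -/
theorem gauss_rate_suboptimal (s : ℝ) (hs : 0 < s) (f : ℝ → ℝ)
    (hf : ContinuousOn f (Set.Icc (-1) 1))
    (hXs : ∃ A : ℝ, ∀ m : ℕ, 1 ≤ m → |chebCoeff f m| ≤ A * (m : ℝ) ^ (-s - 1)) :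
    ∃ C > 0, ∀ n : ℕ, 1 ≤ n → ∀ x w : Fin n → ℝ,
      (∀ k, x k ∈ Set.Icc (-1:ℝ) 1) → (∀ k, 0 < w k) →
      (∀ p : Polynomial ℝ, p.natDegree ≤ 2 * n - 1 →
        ∑ k : Fin n, w k * p.eval (x k) = ∫ t in (-1:ℝ)..1, p.eval t) →
      |(∫ t in (-1:ℝ)..1, f t) - ∑ k : Fin n, w k * f (x k)| ≤ C * (n : ℝ) ^ (-s) := by
  obtain ⟨A, hA⟩ := hXs
  have hA_nonneg : 0 ≤ A := by simpa using (abs_nonneg _).trans (hA 1 le_rfl)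
  refine ⟨4 * A / s + 1, by positivity, fun n hn x w hx hw hexact => ?_⟩
  have hn_pos : (0 : ℝ) < n := by exact_mod_cast hn
  have h_approx : ∀ t ∈ Icc (-1 : ℝ) 1,
      |f t - (chebPartialSum f (2 * n - 1)).eval t| ≤ A * (n : ℝ) ^ (-s) / s := by
    intro t ht
    refine (abs_sub_chebPartialSum_le_of_decay hf hs hA (by omega) ht).trans ?_
    gcongr A * ?_ / s
    exact rpow_le_rpow_of_nonpos hn_pos (Nat.cast_le.2 (by omega)) (by linarith)
  have h_weights : ∑ k, w k = 1 - (-1) := by simpa using hexact 1 (by simp)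
  calc |(∫ t in (-1:ℝ)..1, f t) - ∑ k, w k * f (x k)|
      ≤ 2 * (1 - (-1)) * (A * (n : ℝ) ^ (-s) / s) :=
        abs_integral_sub_sum_le_of_exact (by norm_num)
          (hf.intervalIntegrable_of_Icc (by norm_num)) _ h_approx x w hx (fun k => (hw k).le)
          h_weights (hexact _ (natDegree_chebPartialSum_le f _))
    _ = 4 * A / s * (n : ℝ) ^ (-s) := by ring
    _ ≤ (4 * A / s + 1) * (n : ℝ) ^ (-s) := by gcongr; linarith
end
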